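/- Let X, X' ∈ ℝ^{M×K}, y, y' ∈ ℝ^K with ‖y‖² ≤ τ and ‖y'‖² ≤ τ, z ∈ ℝ^M, and γ ≥ 0. Then ‖(X'y' − z)(y')ᵀ − (Xy − z)yᵀ + 2γ(X' − X)‖_F² ≤ 4(τ² + 4γ²)‖X' − X‖_F² + 4‖Xy − z‖²·‖y' − y‖² + 4τ·‖X(y' − y)‖². -/
import Mathlib


/-- Gradient-difference bound (eq. (Mi)) for the matrix factorization objective. -/
theorem matrix_factorization_gradient_diff_bound {M K : ℕ}
    (X X' : Matrix (Fin M) (Fin K) ℝ) (y y' : Fin K → ℝ) (z : Fin M → ℝ)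
    (τ γ : ℝ) (hγ : 0 ≤ γ)
    (hy : ∑ k, y k ^ 2 ≤ τ) (hy' : ∑ k, y' k ^ 2 ≤ τ) :
    ∑ i, ∑ k,
        ((X'.mulVec y' i - z i) * y' k - (X.mulVec y i - z i) * y k
          + 2 * γ * (X' i k - X i k)) ^ 2
      ≤ 4 * (τ ^ 2 + 4 * γ ^ 2) * ∑ i, ∑ k, (X' i k - X i k) ^ 2
        + 4 * (∑ i, (X.mulVec y i - z i) ^ 2) * (∑ k, (y' k - y k) ^ 2)
        + 4 * τ * ∑ i, (X.mulVec (y' - y) i) ^ 2 := by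
  have hτ : 0 ≤ τ := le_trans (Finset.sum_nonneg fun k _ => sq_nonneg _) hy
  set a : Fin M → ℝ := fun i => ∑ j, (X' i j - X i j) * y' j with ha
  set b : Fin M → ℝ := fun i => X.mulVec (y' - y) i with hb
  set c : Fin M → ℝ := fun i => X.mulVec y i - z i with hc
  have key : ∀ i k, (X'.mulVec y' i - z i) * y' k - (X.mulVec y i - z i) * y k
      + 2 * γ * (X' i k - X i k)
      = a i * y' k + b i * y' k + c i * (y' k - y k) + 2 * γ * (X' i k - X i k) := by
    intro i k
    have h1 : a i = X'.mulVec y' i - X.mulVec y' i := by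
      simp [ha, Matrix.mulVec, dotProduct, sub_mul, Finset.sum_sub_distrib]
    have h2 : b i = X.mulVec y' i - X.mulVec y i := by
      simp [hb, Matrix.mulVec_sub]
    rw [h1, h2, hc]; ring
  have ptwise : ∀ i k, ((X'.mulVec y' i - z i) * y' k - (X.mulVec y i - z i) * y k
      + 2 * γ * (X' i k - X i k)) ^ 2
      ≤ 4 * (a i ^ 2 * y' k ^ 2 + b i ^ 2 * y' k ^ 2 + c i ^ 2 * (y' k - y k) ^ 2
        + 4 * γ ^ 2 * (X' i k - X i k) ^ 2) := by
    intro i k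
    rw [key i k]
    nlinarith [sq_nonneg (a i * y' k - b i * y' k), sq_nonneg (a i * y' k - c i * (y' k - y k)),
      sq_nonneg (a i * y' k - 2 * γ * (X' i k - X i k)),
      sq_nonneg (b i * y' k - c i * (y' k - y k)),
      sq_nonneg (b i * y' k - 2 * γ * (X' i k - X i k)),
      sq_nonneg (c i * (y' k - y k) - 2 * γ * (X' i k - X i k))]
  have step1 : ∑ i, ∑ k, ((X'.mulVec y' i - z i) * y' k - (X.mulVec y i - z i) * y k
      + 2 * γ * (X' i k - X i k)) ^ 2
      ≤ 4 * ((∑ i, a i ^ 2) * (∑ k, y' k ^ 2) + (∑ i, b i ^ 2) * (∑ k, y' k ^ 2)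
        + (∑ i, c i ^ 2) * (∑ k, (y' k - y k) ^ 2)
        + 4 * γ ^ 2 * ∑ i, ∑ k, (X' i k - X i k) ^ 2) := by
    calc ∑ i, ∑ k, ((X'.mulVec y' i - z i) * y' k - (X.mulVec y i - z i) * y k
          + 2 * γ * (X' i k - X i k)) ^ 2
        ≤ ∑ i, ∑ k, 4 * (a i ^ 2 * y' k ^ 2 + b i ^ 2 * y' k ^ 2
            + c i ^ 2 * (y' k - y k) ^ 2 + 4 * γ ^ 2 * (X' i k - X i k) ^ 2) :=
          Finset.sum_le_sum fun i _ => Finset.sum_le_sum fun k _ => ptwise i k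
      _ = 4 * ((∑ i, a i ^ 2) * (∑ k, y' k ^ 2) + (∑ i, b i ^ 2) * (∑ k, y' k ^ 2)
            + (∑ i, c i ^ 2) * (∑ k, (y' k - y k) ^ 2)
            + 4 * γ ^ 2 * ∑ i, ∑ k, (X' i k - X i k) ^ 2) := by
          simp only [Finset.sum_add_distrib, ← Finset.mul_sum, ← Finset.sum_mul]
  -- bound ∑ a² by Cauchy–Schwarz
  have ha2 : ∑ i, a i ^ 2 ≤ τ * ∑ i, ∑ k, (X' i k - X i k) ^ 2 := by
    rw [Finset.mul_sum]
    refine Finset.sum_le_sum fun i _ => ?_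
    calc a i ^ 2 ≤ (∑ j, (X' i j - X i j) ^ 2) * ∑ j, y' j ^ 2 :=
          Finset.sum_mul_sq_le_sq_mul_sq Finset.univ (fun j => X' i j - X i j) y'
      _ ≤ (∑ j, (X' i j - X i j) ^ 2) * τ :=
          mul_le_mul_of_nonneg_left hy' (Finset.sum_nonneg fun j _ => sq_nonneg _)
      _ = τ * ∑ j, (X' i j - X i j) ^ 2 := mul_comm _ _
  have hS : 0 ≤ ∑ i, ∑ k, (X' i k - X i k) ^ 2 :=
    Finset.sum_nonneg fun i _ => Finset.sum_nonneg fun k _ => sq_nonneg _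
  have hb2 : 0 ≤ ∑ i, b i ^ 2 := Finset.sum_nonneg fun i _ => sq_nonneg _
  have h1 : (∑ i, a i ^ 2) * (∑ k, y' k ^ 2) ≤ τ ^ 2 * ∑ i, ∑ k, (X' i k - X i k) ^ 2 := by
    calc (∑ i, a i ^ 2) * (∑ k, y' k ^ 2) ≤ (∑ i, a i ^ 2) * τ :=
          mul_le_mul_of_nonneg_left hy' (Finset.sum_nonneg fun i _ => sq_nonneg _)
      _ ≤ (τ * ∑ i, ∑ k, (X' i k - X i k) ^ 2) * τ :=
          mul_le_mul_of_nonneg_right ha2 hτ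
      _ = τ ^ 2 * ∑ i, ∑ k, (X' i k - X i k) ^ 2 := by ring
  have h2 : (∑ i, b i ^ 2) * (∑ k, y' k ^ 2) ≤ τ * ∑ i, b i ^ 2 := by
    rw [mul_comm τ _]
    exact mul_le_mul_of_nonneg_left hy' hb2
  calc ∑ i, ∑ k, ((X'.mulVec y' i - z i) * y' k - (X.mulVec y i - z i) * y k
        + 2 * γ * (X' i k - X i k)) ^ 2
      ≤ 4 * ((∑ i, a i ^ 2) * (∑ k, y' k ^ 2) + (∑ i, b i ^ 2) * (∑ k, y' k ^ 2)
        + (∑ i, c i ^ 2) * (∑ k, (y' k - y k) ^ 2)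
        + 4 * γ ^ 2 * ∑ i, ∑ k, (X' i k - X i k) ^ 2) := step1
    _ ≤ 4 * ((τ ^ 2 * ∑ i, ∑ k, (X' i k - X i k) ^ 2) + (τ * ∑ i, b i ^ 2)
        + (∑ i, c i ^ 2) * (∑ k, (y' k - y k) ^ 2)
        + 4 * γ ^ 2 * ∑ i, ∑ k, (X' i k - X i k) ^ 2) := by
        nlinarith [h1, h2]
    _ = 4 * (τ ^ 2 + 4 * γ ^ 2) * ∑ i, ∑ k, (X' i k - X i k) ^ 2
        + 4 * (∑ i, c i ^ 2) * (∑ k, (y' k - y k) ^ 2)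
        + 4 * τ * ∑ i, b i ^ 2 := by ring
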